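/- arXiv:2311.16258 — 2 statements merged into one kernel-verified Lean document; each statement's English description precedes it below -/
import Mathlib

section
/- The speculation transformation preserves the weighted language: for any weighted CFG G = ⟨N, Σ, S, R⟩ over a commutative semiring, any P ⊆ R of non-nullary rules, and any C ⊆ Σ ∪ N, SPEC(G, P, C) is N-bijectively equivalent to G; in particular it defines the same weighted language. -/
/-- Symbols of a grammar: nonterminals `N` or terminals `T`. -/
abbrev GSym (N T : Type) := N ⊕ T

/-- A weighted production rule `X →w α`. -/
abbrev GRule (N T W : Type) := N × List (GSym N T) × W

/-- A weighted context-free grammar (rules form a bag/set of weighted rules). -/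
structure WCFG (N T W : Type) where
  start : N
  rules : Set (GRule N T W)

/-- Derivation trees (with a possible `gap` leaf, used to represent a removed
left corner; well-formed derivations contain no gaps). -/
inductive DTree (N T W : Type) where
  | leaf : T → DTree N T W
  | gap  : DTree N T W
  | node : N → W → List (DTree N T W) → DTree N T W

namespace DTree

variable {N T W : Type}

def label : DTree N T W → Option (GSym N T)
  | leaf a => some (Sum.inr a)
  | gap => none
  | node X _ _ => some (Sum.inl X)

def yield : DTree N T W → List T
  | leaf a => [a]
  | gap => []
  | node _ _ ts => (ts.attach.map fun t => t.1.yield).flatten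
decreasing_by simp only [DTree.node.sizeOf_spec]; have := List.sizeOf_lt_of_mem t.2; omega

def weight [Semiring W] : DTree N T W → W
  | leaf _ => 1
  | gap => 1
  | node _ w ts => w * (ts.attach.map fun t => t.1.weight).prod
decreasing_by simp only [DTree.node.sizeOf_spec]; have := List.sizeOf_lt_of_mem t.2; omega

/-- The list of weights of the rules applied at internal nodes. -/
def ruleWeights : DTree N T W → List W
  | leaf _ => []
  | gap => []
  | node _ w ts => w :: (ts.attach.map fun t => t.1.ruleWeights).flatten
decreasing_by simp only [DTree.node.sizeOf_spec]; have := List.sizeOf_lt_of_mem t.2; omega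

/-- Left-recursion depth: length of the path from the root to the leftmost leaf. -/
def lrDepth : DTree N T W → ℕ
  | leaf _ => 0
  | gap => 0
  | node _ _ [] => 0
  | node _ _ (t1 :: _) => t1.lrDepth + 1

/-- `Sub s t` : `s` is a subtree of `t`. -/
inductive Sub : DTree N T W → DTree N T W → Prop
  | refl (t : DTree N T W) : Sub t t
  | child {s t : DTree N T W} {X w ts} : t ∈ ts → Sub s t → Sub s (node X w ts)

end DTree

variable {N T W : Type}

/-- The children list `ts` together with head `X` and weight `w` matches a rule in `R`. -/
def RuleApp (R : Set (GRule N T W)) (X : N) (ts : List (DTree N T W)) (w : W) : Prop :=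
  ∃ rhs, (X, rhs, w) ∈ R ∧ ts.map DTree.label = rhs.map some

/-- Well-formed derivations of a grammar. -/
inductive DTree.WF (G : WCFG N T W) : DTree N T W → Prop
  | leaf (a : T) : DTree.WF G (DTree.leaf a)
  | node {X : N} {w : W} {ts : List (DTree N T W)} :
      RuleApp G.rules X ts w → (∀ t ∈ ts, DTree.WF G t) →
      DTree.WF G (DTree.node X w ts)

/-- The weighted language of a symbol `α`: the sum of the weights of all
well-formed derivations rooted at `α` whose yield is `x`. -/
noncomputable def WCFG.lang [Semiring W] (G : WCFG N T W) (α : GSym N T) (x : List T) : W :=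
  ∑ᶠ t : {t : DTree N T W // t.WF G ∧ t.label = some α ∧ t.yield = x}, (t : DTree N T W).weight

/-- `α` occurs as the label of some subderivation of some derivation rooted at the start symbol. -/
def WCFG.Useful (G : WCFG N T W) (α : GSym N T) : Prop :=
  ∃ t s : DTree N T W, t.WF G ∧ t.label = some (Sum.inl G.start) ∧ s.Sub t ∧ s.label = some α

/-- Trimming: keep only the rules all of whose symbols are useful. -/
def WCFG.trim (G : WCFG N T W) : WCFG N T W where
  start := G.start
  rules := {r | r ∈ G.rules ∧ ∀ s ∈ (Sum.inl r.1 :: r.2.1), G.Useful s}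

/-- A rule participates in some derivation rooted at the start symbol. -/
def WCFG.RuleUseful (G : WCFG N T W) (r : GRule N T W) : Prop :=
  ∃ t s : DTree N T W, t.WF G ∧ t.label = some (Sum.inl G.start) ∧ s.Sub t ∧
    ∃ ts, s = DTree.node r.1 r.2.2 ts ∧ ts.map DTree.label = r.2.1.map some

/-- Union of weighted languages. -/
def wunion [Semiring W] (L L' : List T → W) : List T → W := fun x => L x + L' x

/-- Concatenation of weighted languages: sum over the two-part factorizations. -/
def wconc [Semiring W] (L L' : List T → W) : List T → W := fun x =>
  ((List.range (x.length + 1)).map (fun i => L (x.take i) * L' (x.drop i))).sum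

/-- The zero weighted language. -/
def wzero [Semiring W] : List T → W := fun _ => 0

open Classical in
/-- The unit weighted language: `1` on the empty string, `0` elsewhere. -/
noncomputable def wone [Semiring W] : List T → W := fun x => if x = [] then 1 else 0

/-- Nonterminals of the output of the (generalized) left-corner / speculation
transformations: originals `X`, frozen `X̃`, and slashed `α/β`. -/
inductive LCNT (N T : Type) where
  | orig : N → LCNT N T
  | frozen : N → LCNT N T
  | slash : GSym N T → GSym N T → LCNT N T

/-- Embedding of original symbols into the transformed grammar's symbols. -/
def emb : GSym N T → GSym (LCNT N T) T := Sum.map LCNT.orig id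

/-- The frozen version `α̃` of a symbol (terminals are left unchanged). -/
def frz : GSym N T → GSym (LCNT N T) T
  | Sum.inl X => Sum.inl (LCNT.frozen X)
  | Sum.inr a => Sum.inr a

/-- The generalized left-corner transformation GLCT(G, P, C). -/
def GLCT (G : WCFG N T W) [One W] (P : Set (GRule N T W)) (C : Set (GSym N T)) :
    WCFG (LCNT N T) T W where
  start := LCNT.orig G.start
  rules :=
    {r | ∃ X : N, (Sum.inl X : GSym N T) ∉ C ∧
          r = (LCNT.orig X, [Sum.inl (LCNT.frozen X)], (1 : W))} ∪
    {r | ∃ (X : N) (α : GSym N T), α ∈ C ∧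
          r = (LCNT.orig X, [frz α, Sum.inl (LCNT.slash (Sum.inl X) α)], (1 : W))} ∪
    {r | ∃ α : GSym N T, r = (LCNT.slash α α, [], (1 : W))} ∪
    {r | ∃ (X : N) (α : GSym N T) (β : List (GSym N T)) (w : W) (Y : N),
          (X, α :: β, w) ∈ P ∧
          r = (LCNT.slash (Sum.inl Y) α,
               β.map emb ++ [Sum.inl (LCNT.slash (Sum.inl Y) (Sum.inl X))], w)} ∪
    {r | ∃ (X : N) (rhs : List (GSym N T)) (w : W),
          (X, rhs, w) ∈ G.rules ∧ (X, rhs, w) ∉ P ∧ r = (LCNT.frozen X, rhs.map emb, w)} ∪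
    {r | ∃ (X : N) (α : GSym N T) (β : List (GSym N T)) (w : W),
          (X, α :: β, w) ∈ P ∧ α ∉ C ∧ r = (LCNT.frozen X, frz α :: β.map emb, w)}

/-- The speculation transformation SPEC(G, P, C). -/
def SPEC (G : WCFG N T W) [One W] (P : Set (GRule N T W)) (C : Set (GSym N T)) :
    WCFG (LCNT N T) T W where
  start := LCNT.orig G.start
  rules :=
    {r | ∃ X : N, (Sum.inl X : GSym N T) ∉ C ∧
          r = (LCNT.orig X, [Sum.inl (LCNT.frozen X)], (1 : W))} ∪
    {r | ∃ (X : N) (α : GSym N T), α ∈ C ∧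
          r = (LCNT.orig X, [frz α, Sum.inl (LCNT.slash (Sum.inl X) α)], (1 : W))} ∪
    {r | ∃ α : GSym N T, r = (LCNT.slash α α, [], (1 : W))} ∪
    {r | ∃ (X : N) (α : GSym N T) (β : List (GSym N T)) (w : W) (Y : GSym N T),
          (X, α :: β, w) ∈ P ∧
          r = (LCNT.slash (Sum.inl X) Y,
               Sum.inl (LCNT.slash α Y) :: β.map emb, w)} ∪
    {r | ∃ (X : N) (rhs : List (GSym N T)) (w : W),
          (X, rhs, w) ∈ G.rules ∧ (X, rhs, w) ∉ P ∧ r = (LCNT.frozen X, rhs.map emb, w)} ∪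
    {r | ∃ (X : N) (α : GSym N T) (β : List (GSym N T)) (w : W),
          (X, α :: β, w) ∈ P ∧ α ∉ C ∧ r = (LCNT.frozen X, frz α :: β.map emb, w)}

/-- Edge relation of the left-recursion graph restricted to a rule set `R`:
an edge from `X` to the leftmost right-hand-side symbol of a rule in `R`. -/
def EdgeRel (R : Set (GRule N T W)) (a b : GSym N T) : Prop :=
  ∃ (X : N) (rhs : List (GSym N T)) (w : W),
    a = Sum.inl X ∧ (X, rhs, w) ∈ R ∧ rhs.head? = some b

/-- A rule is left-recursive if its edge lies on a cycle of the left-recursion graph. -/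
def LeftRecRule (G : WCFG N T W) (r : GRule N T W) : Prop :=
  ∃ b, r.2.1.head? = some b ∧ Relation.ReflTransGen (EdgeRel G.rules) b (Sum.inl r.1)

/-- `bottoms(P)`: the symbols that may appear at the bottom of a spine. -/
def bottoms (G : WCFG N T W) (P : Set (GRule N T W)) : Set (GSym N T) :=
  {α | ((∃ a : T, α = Sum.inr a) ∨
        ∃ (X : N) (rhs : List (GSym N T)) (w : W),
          α = Sum.inl X ∧ (X, rhs, w) ∈ G.rules ∧ (X, rhs, w) ∉ P ∧ rhs ≠ []) ∧
       (∃ (X : N) (rhs : List (GSym N T)) (w : W), (X, rhs, w) ∈ P ∧ rhs.head? = some α)}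



/-! ### Auxiliary development for the proof -/

section SpecProof

lemma list_attach_map {α β : Type _} (l : List α) (f : α → β) :
    (l.attach.map fun x => f x.1) = l.map f := by
  simp

namespace DTree

@[simp] lemma yield_leaf (a : T) : (DTree.leaf a : DTree N T W).yield = [a] := by
  simp [DTree.yield]

@[simp] lemma yield_gap : (DTree.gap : DTree N T W).yield = [] := by
  simp [DTree.yield]

@[simp] lemma yield_node (X : N) (w : W) (ts : List (DTree N T W)) :
    (DTree.node X w ts).yield = (ts.map DTree.yield).flatten := by
  rw [DTree.yield, list_attach_map]

@[simp] lemma weight_leaf [Semiring W] (a : T) :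
    (DTree.leaf a : DTree N T W).weight = 1 := by simp [DTree.weight]

@[simp] lemma weight_node [Semiring W] (X : N) (w : W) (ts : List (DTree N T W)) :
    (DTree.node X w ts).weight = w * (ts.map DTree.weight).prod := by
  rw [DTree.weight, list_attach_map]

@[simp] lemma label_leaf (a : T) : (DTree.leaf a : DTree N T W).label = some (Sum.inr a) := rfl
@[simp] lemma label_gap : (DTree.gap : DTree N T W).label = none := rfl
@[simp] lemma label_node (X : N) (w : W) (ts : List (DTree N T W)) :
    (DTree.node X w ts).label = some (Sum.inl X) := rfl

lemma eq_node_of_label_inl {t : DTree N T W} {X : N} (h : t.label = some (Sum.inl X)) :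
    ∃ w ts, t = DTree.node X w ts := by
  cases t with
  | leaf a => simp [DTree.label] at h
  | gap => simp [DTree.label] at h
  | node Y w ts => simp [DTree.label] at h; exact ⟨w, ts, by rw [h]⟩

lemma eq_leaf_of_label_inr {t : DTree N T W} {a : T} (h : t.label = some (Sum.inr a)) :
    t = DTree.leaf a := by
  cases t with
  | leaf b => simp [DTree.label] at h; rw [h]
  | gap => simp [DTree.label] at h
  | node Y w ts => simp [DTree.label] at h

end DTree

/-- Whether the rule application at a node belongs to `P`. -/
def InP (P : Set (GRule N T W)) (X : N) (ts : List (DTree N T W)) (w : W) : Prop :=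
  ∃ rhs, (X, rhs, w) ∈ P ∧ ts.map DTree.label = rhs.map some

open Classical in
/-- The deepest node on the maximal `P`-spine whose label is in `C` (if any). -/
noncomputable def stopT (P : Set (GRule N T W)) (C : Set (GSym N T)) :
    DTree N T W → Option (DTree N T W)
  | DTree.leaf a =>
      if (Sum.inr a : GSym N T) ∈ C then some (DTree.leaf a) else none
  | DTree.gap => none
  | DTree.node X w [] =>
      if (Sum.inl X : GSym N T) ∈ C then some (DTree.node X w []) else none
  | DTree.node X w (t1 :: rest) =>
      match (if InP P X (t1 :: rest) w then stopT P C t1 else none) with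
      | some s => some s
      | none =>
        if (Sum.inl X : GSym N T) ∈ C then some (DTree.node X w (t1 :: rest)) else none
termination_by t => sizeOf t
decreasing_by simp; omega

/-- Modes of the forward transformation: original, frozen, and slashed. -/
inductive TMode (N T : Type) where
  | O : TMode N T
  | F : TMode N T
  | S : GSym N T → TMode N T

def TMode.rank : TMode N T → Nat
  | TMode.O => 1
  | _ => 0

theorem stopT_le (P : Set (GRule N T W)) (C : Set (GSym N T)) :
    ∀ (t s : DTree N T W), stopT P C t = some s → s = t ∨ sizeOf s < sizeOf t
  | DTree.leaf a, s, h => by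
    rw [stopT] at h; split at h <;> simp_all
  | DTree.gap, s, h => by rw [stopT] at h; simp at h
  | DTree.node X w [], s, h => by
    rw [stopT] at h; split at h <;> simp_all
  | DTree.node X w (t1 :: rest), s, h => by
    rw [stopT] at h
    split at h
    · rename_i s' heq
      split at heq
      · cases h
        rcases stopT_le P C t1 s heq with h1 | h1
        · subst h1; right; simp; omega
        · right; simp; omega
      · simp at heq
    · split at h <;> simp_all
termination_by t => sizeOf t
decreasing_by simp; omega

open Classical in
/-- The forward tree transformation (G-derivations to SPEC-derivations). -/
noncomputable def fwd (P : Set (GRule N T W)) (C : Set (GSym N T)) [One W] :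
    TMode N T → DTree N T W → DTree (LCNT N T) T W
  | TMode.O, DTree.leaf a => DTree.leaf a
  | TMode.F, DTree.leaf a => DTree.leaf a
  | TMode.S α, DTree.leaf _ => DTree.node (LCNT.slash α α) 1 []
  | _, DTree.gap => DTree.gap
  | TMode.O, DTree.node X w ts =>
      match h : stopT P C (DTree.node X w ts) with
      | none => DTree.node (LCNT.orig X) 1 [fwd P C TMode.F (DTree.node X w ts)]
      | some s => DTree.node (LCNT.orig X) 1
          [fwd P C TMode.F s,
           fwd P C (TMode.S (s.label.getD (Sum.inl X))) (DTree.node X w ts)]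
  | TMode.F, DTree.node X w [] => DTree.node (LCNT.frozen X) w []
  | TMode.F, DTree.node X w (t1 :: rest) =>
      if InP P X (t1 :: rest) w then
        DTree.node (LCNT.frozen X) w
          (fwd P C TMode.F t1 :: rest.attach.map fun r => fwd P C TMode.O r.1)
      else
        DTree.node (LCNT.frozen X) w
          ((t1 :: rest).attach.map fun r => fwd P C TMode.O r.1)
  | TMode.S α, DTree.node _ _ [] => DTree.node (LCNT.slash α α) 1 []
  | TMode.S α, DTree.node X w (t1 :: rest) =>
      if InP P X (t1 :: rest) w ∧ (stopT P C t1).isSome then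
        DTree.node (LCNT.slash (Sum.inl X) α) w
          (fwd P C (TMode.S α) t1 :: rest.attach.map fun r => fwd P C TMode.O r.1)
      else DTree.node (LCNT.slash α α) 1 []
termination_by m t => (sizeOf t, m.rank)
decreasing_by
  all_goals simp_wf
  all_goals simp only [Prod.lex_def, TMode.rank]
  all_goals first
    | (rcases stopT_le P C _ _ h with h1 | h1
       · subst h1; simp
       · left; simp at h1 ⊢; omega)
    | (left; omega)
    | (left; have := List.sizeOf_lt_of_mem r.2; simp at this ⊢; omega)
    | simp

/-- The backward tree transformation (SPEC-derivations to G-derivations).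
The optional argument is the tree to plug in at the bottom of a slashed spine. -/
noncomputable def bwd : Option (DTree N T W) → DTree (LCNT N T) T W → DTree N T W
  | _, DTree.leaf a => DTree.leaf a
  | _, DTree.gap => DTree.gap
  | none, DTree.node (LCNT.orig _) _ [u] => bwd none u
  | none, DTree.node (LCNT.orig _) _ [s, u] => bwd (some (bwd none s)) u
  | none, DTree.node (LCNT.orig _) _ _ => DTree.gap
  | none, DTree.node (LCNT.frozen X) w ts =>
      DTree.node X w (ts.attach.map fun c => bwd none c.1)
  | none, DTree.node (LCNT.slash _ _) _ _ => DTree.gap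
  | some b, DTree.node _ _ [] => b
  | some b, DTree.node (LCNT.slash (Sum.inl X) _) w (c :: rest) =>
      DTree.node X w (bwd (some b) c :: rest.attach.map fun d => bwd none d.1)
  | some _, DTree.node _ _ (_ :: _) => DTree.gap
termination_by _ t => sizeOf t
decreasing_by
  all_goals simp_wf
  all_goals first
    | omega
    | (have := List.sizeOf_lt_of_mem c.2; simp at this ⊢ <;> omega)
    | (have := List.sizeOf_lt_of_mem d.2; simp at this ⊢ <;> omega)



section Eqs
open Classical

variable {N T W : Type} (P : Set (GRule N T W)) (C : Set (GSym N T))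

lemma stopT_leaf (a : T) :
    stopT P C (DTree.leaf a) =
      if (Sum.inr a : GSym N T) ∈ C then some (DTree.leaf a) else none := by
  rw [stopT]

lemma stopT_nil (X : N) (w : W) :
    stopT P C (DTree.node X w []) =
      if (Sum.inl X : GSym N T) ∈ C then some (DTree.node X w []) else none := by
  rw [stopT]

lemma stopT_cons (X : N) (w : W) (t1 : DTree N T W) (rest : List (DTree N T W)) :
    stopT P C (DTree.node X w (t1 :: rest)) =
      match (if InP P X (t1 :: rest) w then stopT P C t1 else none) with
      | some s => some s
      | none =>
        if (Sum.inl X : GSym N T) ∈ C then some (DTree.node X w (t1 :: rest)) else none := by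
  rw [stopT]

lemma stopT_none_label {t : DTree N T W} (h : stopT P C t = none) :
    ∀ α, t.label = some α → α ∉ C := by
  intro α hl hC
  cases t with
  | leaf a =>
    simp [DTree.label] at hl; subst hl
    rw [stopT_leaf, if_pos hC] at h; simp at h
  | gap => simp [DTree.label] at hl
  | node X w ts =>
    simp [DTree.label] at hl; subst hl
    cases ts with
    | nil => rw [stopT_nil, if_pos hC] at h; simp at h
    | cons t1 rest =>
      rw [stopT_cons] at h
      split at h
      · simp at h
      · rw [if_pos hC] at h; simp at h

lemma stopT_some_label :
    ∀ {t s : DTree N T W}, stopT P C t = some s → ∃ α, s.label = some α ∧ α ∈ C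
  | DTree.leaf a, s, h => by
    rw [stopT_leaf] at h; split at h
    · cases h; exact ⟨_, rfl, by assumption⟩
    · simp at h
  | DTree.gap, s, h => by rw [stopT] at h; simp at h
  | DTree.node X w [], s, h => by
    rw [stopT_nil] at h; split at h
    · cases h; exact ⟨_, rfl, by assumption⟩
    · simp at h
  | DTree.node X w (t1 :: rest), s, h => by
    rw [stopT_cons] at h
    split at h
    · rename_i s' heq
      cases h
      split at heq
      · exact stopT_some_label heq
      · simp at heq
    · split at h
      · cases h; exact ⟨_, rfl, by assumption⟩
      · simp at h
termination_by t => sizeOf t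
decreasing_by simp; omega

lemma stopT_idem :
    ∀ {t s : DTree N T W}, stopT P C t = some s → stopT P C s = some s
  | DTree.leaf a, s, h => by
    rw [stopT_leaf] at h; split at h
    · cases h; rw [stopT_leaf]; simp_all
    · simp at h
  | DTree.gap, s, h => by rw [stopT] at h; simp at h
  | DTree.node X w [], s, h => by
    rw [stopT_nil] at h; split at h
    · cases h; rw [stopT_nil]; simp_all
    · simp at h
  | DTree.node X w (t1 :: rest), s, h => by
    rw [stopT_cons] at h
    split at h
    · rename_i s' heq
      cases h
      split at heq
      · exact stopT_idem heq
      · simp at heq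
    · rename_i heq
      split at h
      · cases h; rw [stopT_cons, heq]; simp_all
      · simp at h
termination_by t => sizeOf t
decreasing_by simp; omega

/-- If the spine stop of a cons-node is `none` or the node itself, and the rule
is in `P`, then the left corner has no stop. -/
lemma stopT_corner_none {X : N} {w : W} {t1 : DTree N T W} {rest : List (DTree N T W)}
    (h : stopT P C (DTree.node X w (t1 :: rest)) = none ∨
         stopT P C (DTree.node X w (t1 :: rest)) = some (DTree.node X w (t1 :: rest)))
    (hp : InP P X (t1 :: rest) w) : stopT P C t1 = none := by
  rcases hs : stopT P C t1 with _ | s'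
  · rfl
  · exfalso
    have hcons : stopT P C (DTree.node X w (t1 :: rest)) = some s' := by
      rw [stopT_cons, if_pos hp, hs]
    rcases h with h | h
    · rw [hcons] at h; simp at h
    · rw [hcons] at h
      have := stopT_le P C t1 s' hs
      have hlt : sizeOf s' < sizeOf (DTree.node X w (t1 :: rest)) := by
        rcases this with h1 | h1
        · subst h1; simp; omega
        · simp at h1 ⊢; omega
      injection h with h
      subst h
      exact lt_irrefl _ hlt

lemma stopT_wf {G : WCFG N T W} :
    ∀ {t s : DTree N T W}, t.WF G → stopT P C t = some s → s.WF G
  | DTree.leaf a, s, hwf, h => by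
    rw [stopT_leaf] at h; split at h
    · cases h; exact hwf
    · simp at h
  | DTree.gap, s, hwf, h => by rw [stopT] at h; simp at h
  | DTree.node X w [], s, hwf, h => by
    rw [stopT_nil] at h; split at h
    · cases h; exact hwf
    · simp at h
  | DTree.node X w (t1 :: rest), s, hwf, h => by
    rw [stopT_cons] at h
    split at h
    · rename_i s' heq
      cases h
      split at heq
      · cases hwf with
        | node hr hts => exact stopT_wf (hts t1 (by simp)) heq
      · simp at heq
    · split at h
      · cases h; exact hwf
      · simp at h
termination_by t => sizeOf t
decreasing_by simp; omega

end Eqs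
section Eqs2
open Classical

variable {N T W : Type} [One W] (P : Set (GRule N T W)) (C : Set (GSym N T))

@[simp] lemma fwd_gap (m : TMode N T) : fwd P C m DTree.gap = DTree.gap := by
  cases m <;> rw [fwd]

@[simp] lemma fwd_O_leaf (a : T) : fwd P C TMode.O (DTree.leaf a) = DTree.leaf a := by rw [fwd]

@[simp] lemma fwd_F_leaf (a : T) : fwd P C TMode.F (DTree.leaf a) = DTree.leaf a := by rw [fwd]

@[simp] lemma fwd_S_leaf (α : GSym N T) (a : T) :
    fwd P C (TMode.S α) (DTree.leaf a) = DTree.node (LCNT.slash α α) 1 [] := by rw [fwd]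

lemma fwd_O_none {X : N} {w : W} {ts : List (DTree N T W)}
    (h : stopT P C (DTree.node X w ts) = none) :
    fwd P C TMode.O (DTree.node X w ts) =
      DTree.node (LCNT.orig X) 1 [fwd P C TMode.F (DTree.node X w ts)] := by
  rw [fwd]; split <;> simp_all

lemma fwd_O_some {X : N} {w : W} {ts : List (DTree N T W)} {s : DTree N T W}
    (h : stopT P C (DTree.node X w ts) = some s) :
    fwd P C TMode.O (DTree.node X w ts) =
      DTree.node (LCNT.orig X) 1
        [fwd P C TMode.F s,
         fwd P C (TMode.S (s.label.getD (Sum.inl X))) (DTree.node X w ts)] := by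
  rw [fwd]; split <;> simp_all

lemma fwd_F_nil (X : N) (w : W) :
    fwd P C TMode.F (DTree.node X w []) = DTree.node (LCNT.frozen X) w [] := by rw [fwd]

lemma fwd_F_pos {X : N} {w : W} {t1 : DTree N T W} {rest : List (DTree N T W)}
    (hp : InP P X (t1 :: rest) w) :
    fwd P C TMode.F (DTree.node X w (t1 :: rest)) =
      DTree.node (LCNT.frozen X) w
        (fwd P C TMode.F t1 :: rest.map (fwd P C TMode.O)) := by
  rw [fwd, if_pos hp, list_attach_map]

lemma fwd_F_neg {X : N} {w : W} {t1 : DTree N T W} {rest : List (DTree N T W)}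
    (hp : ¬ InP P X (t1 :: rest) w) :
    fwd P C TMode.F (DTree.node X w (t1 :: rest)) =
      DTree.node (LCNT.frozen X) w ((t1 :: rest).map (fwd P C TMode.O)) := by
  rw [fwd, if_neg hp, list_attach_map]

lemma fwd_S_nil (α : GSym N T) (X : N) (w : W) :
    fwd P C (TMode.S α) (DTree.node X w []) = DTree.node (LCNT.slash α α) 1 [] := by rw [fwd]

lemma fwd_S_pos {α : GSym N T} {X : N} {w : W} {t1 : DTree N T W} {rest : List (DTree N T W)}
    (hp : InP P X (t1 :: rest) w ∧ (stopT P C t1).isSome) :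
    fwd P C (TMode.S α) (DTree.node X w (t1 :: rest)) =
      DTree.node (LCNT.slash (Sum.inl X) α) w
        (fwd P C (TMode.S α) t1 :: rest.map (fwd P C TMode.O)) := by
  rw [fwd, if_pos hp, list_attach_map]

lemma fwd_S_neg {α : GSym N T} {X : N} {w : W} {t1 : DTree N T W} {rest : List (DTree N T W)}
    (hp : ¬ (InP P X (t1 :: rest) w ∧ (stopT P C t1).isSome)) :
    fwd P C (TMode.S α) (DTree.node X w (t1 :: rest)) =
      DTree.node (LCNT.slash α α) 1 [] := by
  rw [fwd, if_neg hp]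

@[simp] lemma bwd_leaf (m : Option (DTree N T W)) (a : T) :
    bwd m (DTree.leaf a : DTree (LCNT N T) T W) = DTree.leaf a := by
  cases m <;> rw [bwd]

@[simp] lemma bwd_gap (m : Option (DTree N T W)) :
    bwd m (DTree.gap : DTree (LCNT N T) T W) = DTree.gap := by
  cases m <;> rw [bwd]

@[simp] lemma bwd_none_orig1 (X : N) (w : W) (u : DTree (LCNT N T) T W) :
    bwd none (DTree.node (LCNT.orig X) w [u]) = bwd none u := by rw [bwd]

@[simp] lemma bwd_none_orig2 (X : N) (w : W) (s u : DTree (LCNT N T) T W) :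
    bwd none (DTree.node (LCNT.orig X) w [s, u]) = bwd (some (bwd none s)) u := by rw [bwd]

@[simp] lemma bwd_none_frozen (X : N) (w : W) (ts : List (DTree (LCNT N T) T W)) :
    bwd none (DTree.node (LCNT.frozen X) w ts) =
      DTree.node X w (ts.map (bwd (none : Option (DTree N T W)))) := by
  rw [bwd, list_attach_map]

@[simp] lemma bwd_some_nil (b : DTree N T W) (L : LCNT N T) (w : W) :
    bwd (some b) (DTree.node L w []) = b := by rw [bwd]

@[simp] lemma bwd_some_cons (b : DTree N T W) (X : N) (β : GSym N T) (w : W)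
    (c : DTree (LCNT N T) T W) (rest : List (DTree (LCNT N T) T W)) :
    bwd (some b) (DTree.node (LCNT.slash (Sum.inl X) β) w (c :: rest)) =
      DTree.node X w (bwd (some b) c :: rest.map (bwd (none : Option (DTree N T W)))) := by
  rw [bwd, list_attach_map]

end Eqs2
section FB
open Classical

variable {N T W : Type} [One W]

lemma list_map_comp_id {α β : Type _} {f : α → β} {g : β → α} (l : List α)
    (h : ∀ x ∈ l, g (f x) = x) : (l.map f).map g = l := by
  rw [List.map_map]
  have : l.map (g ∘ f) = l.map id := List.map_congr_left h
  rw [this, List.map_id]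

theorem fb (P : Set (GRule N T W)) (C : Set (GSym N T)) :
    ∀ (t : DTree N T W),
      bwd none (fwd P C TMode.F t) = t ∧
      (∀ (s : DTree N T W) (α : GSym N T), stopT P C t = some s →
          bwd (some s) (fwd P C (TMode.S α) t) = t) ∧
      bwd none (fwd P C TMode.O t) = t
  | DTree.leaf a => by
    refine ⟨by simp, fun s α h => ?_, by simp⟩
    rw [stopT_leaf] at h
    split at h
    · cases h; simp
    · simp at h
  | DTree.gap => by
    refine ⟨by simp, fun s α h => ?_, by simp⟩
    rw [stopT] at h; simp at h
  | DTree.node X w ts => by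
    have hmemIH : ∀ r ∈ ts, bwd none (fwd P C TMode.O r) = r := by
      intro r hmem
      exact (fb P C r).2.2
    have hF : bwd none (fwd P C TMode.F (DTree.node X w ts)) = DTree.node X w ts := by
      cases ts with
      | nil => rw [fwd_F_nil]; simp
      | cons t1 rest =>
        by_cases hp : InP P X (t1 :: rest) w
        · rw [fwd_F_pos P C hp, bwd_none_frozen]
          have h1 : bwd none (fwd P C TMode.F t1) = t1 :=
            (fb P C t1).1
          rw [List.map_cons, h1,
            list_map_comp_id rest (fun r hr => hmemIH r (by simp [hr]))]
        · rw [fwd_F_neg P C hp, bwd_none_frozen,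
            list_map_comp_id _ (fun r hr => hmemIH r hr)]
    have hS : ∀ (s : DTree N T W) (α : GSym N T),
        stopT P C (DTree.node X w ts) = some s →
        bwd (some s) (fwd P C (TMode.S α) (DTree.node X w ts)) = DTree.node X w ts := by
      intro s α h
      cases ts with
      | nil =>
        rw [stopT_nil] at h
        split at h
        · cases h; rw [fwd_S_nil]; simp
        · simp at h
      | cons t1 rest =>
        rw [stopT_cons] at h
        by_cases hc : InP P X (t1 :: rest) w ∧ (stopT P C t1).isSome
        · rcases hso : stopT P C t1 with _ | s'
          · rw [hso] at hc; simp at hc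
          · have hs : s' = s := by
              rw [if_pos hc.1, hso] at h; simpa using h
            subst hs
            rw [fwd_S_pos P C hc, bwd_some_cons]
            have h1 : bwd (some s') (fwd P C (TMode.S α) t1) = t1 :=
              (fb P C t1).2.1 s' α hso
            rw [h1, list_map_comp_id rest (fun r hr => hmemIH r (by simp [hr]))]
        · have hnone : (if InP P X (t1 :: rest) w then stopT P C t1 else none) = none := by
            by_cases hp : InP P X (t1 :: rest) w
            · rw [if_pos hp]
              rcases hx : stopT P C t1 with _ | s''
              · rfl
              · exact absurd ⟨hp, by rw [hx]; simp⟩ hc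
            · rw [if_neg hp]
          rw [hnone] at h
          have hs : s = DTree.node X w (t1 :: rest) := by
            split at h <;> first | simp_all | (split at h <;> simp_all)
          rw [fwd_S_neg P C hc, bwd_some_nil, hs]
    refine ⟨hF, hS, ?_⟩
    rcases hst : stopT P C (DTree.node X w ts) with _ | s
    · rw [fwd_O_none P C hst, bwd_none_orig1, hF]
    · rw [fwd_O_some P C hst, bwd_none_orig2]
      have hbs : bwd none (fwd P C TMode.F s) = s := by
        rcases stopT_le P C _ _ hst with h1 | h1
        · rw [h1]; exact hF
        · have hlt : sizeOf s < sizeOf (DTree.node X w ts) := h1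
          exact (fb P C s).1
      rw [hbs]
      exact hS s _ hst
termination_by t => sizeOf t
decreasing_by
  all_goals first
    | (have := List.sizeOf_lt_of_mem hmem; simp at this ⊢; omega)
    | (have := List.sizeOf_lt_of_mem hr; simp at this ⊢; omega)
    | (simp at hlt ⊢; omega)
    | (simp; omega)

end FB
section FwdOk
open Classical

variable {N T W : Type}

lemma list_map_comp_congr {α β γ : Type _} {f : α → β} {g : β → γ} {h : α → γ}
    (l : List α) (H : ∀ x ∈ l, g (f x) = h x) : (l.map f).map g = l.map h := by
  rw [List.map_map]; exact List.map_congr_left H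

lemma rhs_of_cons {t1 : DTree N T W} {rest : List (DTree N T W)} {rhs : List (GSym N T)}
    (hlab : (t1 :: rest).map DTree.label = rhs.map some) :
    ∃ α' rrhs, rhs = α' :: rrhs ∧ t1.label = some α' ∧
      rest.map DTree.label = rrhs.map some := by
  cases rhs with
  | nil => simp at hlab
  | cons a as =>
    simp only [List.map_cons, List.cons.injEq] at hlab
    exact ⟨a, as, rfl, hlab.1, hlab.2⟩

lemma inP_iff {P : Set (GRule N T W)} {X : N} {ts : List (DTree N T W)} {w : W}
    {rhs : List (GSym N T)} (hlab : ts.map DTree.label = rhs.map some) :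
    InP P X ts w ↔ (X, rhs, w) ∈ P := by
  constructor
  · rintro ⟨rhs', hm, hl⟩
    have : rhs.map some = rhs'.map some := hlab ▸ hl
    have : rhs = rhs' := by
      have hinj : Function.Injective (some : GSym N T → Option (GSym N T)) :=
        fun a b h => Option.some.inj h
      exact List.map_injective_iff.mpr hinj this
    rwa [this]
  · intro h; exact ⟨rhs, h, hlab⟩

lemma labels_map_emb {g : DTree N T W → DTree (LCNT N T) T W}
    {ts : List (DTree N T W)} {rhs : List (GSym N T)}
    (hlab : ts.map DTree.label = rhs.map some)
    (h : ∀ c ∈ ts, (g c).label = c.label.map emb) :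
    (ts.map g).map DTree.label = (rhs.map emb).map some := by
  have h1 : (ts.map g).map DTree.label = (ts.map DTree.label).map (Option.map emb) := by
    rw [List.map_map, List.map_map]
    exact List.map_congr_left (fun c hc => by simp [Function.comp, h c hc])
  rw [h1, hlab, List.map_map, List.map_map]
  exact List.map_congr_left (fun x _ => rfl)

variable [CommSemiring W] {G : WCFG N T W} {P : Set (GRule N T W)} {C : Set (GSym N T)}

lemma spec_rule1 {X : N} (h : (Sum.inl X : GSym N T) ∉ C) :
    (LCNT.orig X, [Sum.inl (LCNT.frozen X)], (1 : W)) ∈ (SPEC G P C).rules := by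
  simp only [SPEC, Set.mem_union, Set.mem_setOf_eq]
  exact Or.inl (Or.inl (Or.inl (Or.inl (Or.inl ⟨X, h, rfl⟩))))

lemma spec_rule2 {X : N} {α : GSym N T} (h : α ∈ C) :
    (LCNT.orig X, [frz α, Sum.inl (LCNT.slash (Sum.inl X) α)], (1 : W)) ∈
      (SPEC G P C).rules := by
  simp only [SPEC, Set.mem_union, Set.mem_setOf_eq]
  exact Or.inl (Or.inl (Or.inl (Or.inl (Or.inr ⟨X, α, h, rfl⟩))))

lemma spec_rule3 (α : GSym N T) :
    (LCNT.slash α α, [], (1 : W)) ∈ (SPEC G P C).rules := by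
  simp only [SPEC, Set.mem_union, Set.mem_setOf_eq]
  exact Or.inl (Or.inl (Or.inl (Or.inr ⟨α, rfl⟩)))

lemma spec_rule4 {X : N} {α : GSym N T} {β : List (GSym N T)} {w : W} (Y : GSym N T)
    (h : (X, α :: β, w) ∈ P) :
    (LCNT.slash (Sum.inl X) Y, Sum.inl (LCNT.slash α Y) :: β.map emb, w) ∈
      (SPEC G P C).rules := by
  simp only [SPEC, Set.mem_union, Set.mem_setOf_eq]
  exact Or.inl (Or.inl (Or.inr ⟨X, α, β, w, Y, h, rfl⟩))

lemma spec_rule5 {X : N} {rhs : List (GSym N T)} {w : W}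
    (h : (X, rhs, w) ∈ G.rules) (h2 : (X, rhs, w) ∉ P) :
    (LCNT.frozen X, rhs.map emb, w) ∈ (SPEC G P C).rules := by
  simp only [SPEC, Set.mem_union, Set.mem_setOf_eq]
  exact Or.inl (Or.inr ⟨X, rhs, w, h, h2, rfl⟩)

lemma spec_rule6 {X : N} {α : GSym N T} {β : List (GSym N T)} {w : W}
    (h : (X, α :: β, w) ∈ P) (h2 : α ∉ C) :
    (LCNT.frozen X, frz α :: β.map emb, w) ∈ (SPEC G P C).rules := by
  simp only [SPEC, Set.mem_union, Set.mem_setOf_eq]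
  exact Or.inr ⟨X, α, β, w, h, h2, rfl⟩

/-- Conclusion of the forward correctness lemma. -/
abbrev FwdConc (G : WCFG N T W) (P : Set (GRule N T W)) (C : Set (GSym N T))
    (t : DTree N T W) : Prop :=
    (((stopT P C t = none ∨ stopT P C t = some t) →
       (fwd P C TMode.F t).WF (SPEC G P C) ∧
       (fwd P C TMode.F t).label = t.label.map frz ∧
       (fwd P C TMode.F t).yield = t.yield ∧
       (fwd P C TMode.F t).weight = t.weight) ∧
     (∀ (s : DTree N T W) (α : GSym N T), stopT P C t = some s → s.label = some α →
       (fwd P C (TMode.S α) t).WF (SPEC G P C) ∧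
       (∀ β, t.label = some β →
          (fwd P C (TMode.S α) t).label = some (Sum.inl (LCNT.slash β α))) ∧
       s.yield ++ (fwd P C (TMode.S α) t).yield = t.yield ∧
       s.weight * (fwd P C (TMode.S α) t).weight = t.weight)) ∧
    ((fwd P C TMode.O t).WF (SPEC G P C) ∧
     (fwd P C TMode.O t).label = t.label.map emb ∧
     (fwd P C TMode.O t).yield = t.yield ∧
     (fwd P C TMode.O t).weight = t.weight)

theorem fwd_ok (G : WCFG N T W) (P : Set (GRule N T W)) (C : Set (GSym N T))
    (hP : P ⊆ G.rules) (hPnn : ∀ r ∈ P, r.2.1 ≠ []) :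
    ∀ (t : DTree N T W), t.WF G → FwdConc G P C t
  | DTree.leaf a, hwf => by
    constructor
    · constructor
      · intro _
        exact ⟨by simpa using DTree.WF.leaf (G := SPEC G P C) a, by simp [frz], by simp, by simp⟩
      · intro s α hs hα
        have hsl : s = DTree.leaf a := by
          rw [stopT_leaf] at hs; split at hs
          · cases hs; rfl
          · simp at hs
        subst hsl
        simp only [DTree.label_leaf, Option.some.injEq] at hα
        subst hα
        refine ⟨?_, ?_, by simp, by simp⟩
        · rw [fwd_S_leaf]
          exact DTree.WF.node ⟨[], spec_rule3 _, by simp⟩ (by simp)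
        · intro β hβ
          simp only [DTree.label_leaf, Option.some.injEq] at hβ
          subst hβ
          simp
    · exact ⟨by simpa using DTree.WF.leaf (G := SPEC G P C) a, by simp [emb], by simp, by simp⟩
  | DTree.gap, hwf => by cases hwf
  | DTree.node X w ts, hwf => by
    obtain ⟨hr, hts⟩ : RuleApp G.rules X ts w ∧ ∀ c ∈ ts, c.WF G := by
      cases hwf with
      | node hr hts => exact ⟨hr, hts⟩
    obtain ⟨rhs, hrG, hlab⟩ := hr
    have hRecSmall : ∀ u : DTree N T W, sizeOf u < sizeOf (DTree.node X w ts) →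
        u.WF G → FwdConc G P C u := fun u hlt hu => fwd_ok G P C hP hPnn u hu
    have hRec : ∀ c ∈ ts, FwdConc G P C c := fun c hc =>
      hRecSmall c (by have := List.sizeOf_lt_of_mem hc; simp at this ⊢; omega) (hts c hc)
    have hOc : ∀ c ∈ ts,
        (fwd P C TMode.O c).WF (SPEC G P C) ∧
        (fwd P C TMode.O c).label = c.label.map emb ∧
        (fwd P C TMode.O c).yield = c.yield ∧
        (fwd P C TMode.O c).weight = c.weight := fun c hc => (hRec c hc).2
    -- F part
    have hFpart : (stopT P C (DTree.node X w ts) = none ∨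
        stopT P C (DTree.node X w ts) = some (DTree.node X w ts)) →
        (fwd P C TMode.F (DTree.node X w ts)).WF (SPEC G P C) ∧
        (fwd P C TMode.F (DTree.node X w ts)).label =
          (DTree.node X w ts).label.map frz ∧
        (fwd P C TMode.F (DTree.node X w ts)).yield = (DTree.node X w ts).yield ∧
        (fwd P C TMode.F (DTree.node X w ts)).weight = (DTree.node X w ts).weight := by
      intro hfr
      by_cases hp : InP P X ts w
      · -- rule in P: ts nonempty
        cases ts with
        | nil =>
          exfalso
          obtain ⟨rhs', hm, hl⟩ := hp
          have hnil : rhs' = [] := by simpa using hl.symm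
          exact hPnn _ hm (by simp [hnil])
        | cons t1 rest =>
          obtain ⟨α', rrhs, hre, hl1, hlr⟩ := rhs_of_cons hlab
          subst hre
          have hpm : (X, α' :: rrhs, w) ∈ P := (inP_iff hlab).mp hp
          have hcnone : stopT P C t1 = none := stopT_corner_none P C hfr hp
          have hnotC : α' ∉ C := stopT_none_label P C hcnone α' hl1
          have hF1 := (hRec t1 (by simp)).1.1 (Or.inl hcnone)
          rw [fwd_F_pos P C hp]
          refine ⟨?_, by simp [frz], ?_, ?_⟩
          · refine DTree.WF.node ⟨frz α' :: rrhs.map emb, spec_rule6 hpm hnotC, ?_⟩ ?_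
            · simp only [List.map_cons, hF1.2.1, hl1]
              rw [labels_map_emb hlr (fun c hc => (hOc c (by simp [hc])).2.1)]
              simp [Option.map]
            · intro u hu
              simp only [List.mem_cons] at hu
              rcases hu with hu | hu
              · rw [hu]; exact hF1.1
              · obtain ⟨c, hc, rfl⟩ := List.mem_map.mp hu
                exact (hOc c (by simp [hc])).1
          · simp only [DTree.yield_node, List.map_cons, hF1.2.2.1]
            rw [list_map_comp_congr rest (fun c hc => (hOc c (by simp [hc])).2.2.1)]
          · simp only [DTree.weight_node, List.map_cons, hF1.2.2.2]
            rw [list_map_comp_congr rest (fun c hc => (hOc c (by simp [hc])).2.2.2)]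
      · -- rule not in P: rule 5
        have hpm : (X, rhs, w) ∉ P := fun hm => hp ((inP_iff hlab).mpr hm)
        have heq : fwd P C TMode.F (DTree.node X w ts) =
            DTree.node (LCNT.frozen X) w (ts.map (fwd P C TMode.O)) := by
          cases ts with
          | nil => rw [fwd_F_nil]; simp
          | cons t1 rest => exact fwd_F_neg P C hp
        rw [heq]
        refine ⟨?_, by simp [frz], ?_, ?_⟩
        · refine DTree.WF.node ⟨rhs.map emb, spec_rule5 hrG hpm, ?_⟩ ?_
          · exact labels_map_emb hlab (fun c hc => (hOc c hc).2.1)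
          · intro u hu
            obtain ⟨c, hc, rfl⟩ := List.mem_map.mp hu
            exact (hOc c hc).1
        · simp only [DTree.yield_node]
          rw [list_map_comp_congr ts (fun c hc => (hOc c hc).2.2.1)]
        · simp only [DTree.weight_node]
          rw [list_map_comp_congr ts (fun c hc => (hOc c hc).2.2.2)]
    -- S part
    have hSpart : ∀ (s : DTree N T W) (α : GSym N T),
        stopT P C (DTree.node X w ts) = some s → s.label = some α →
        (fwd P C (TMode.S α) (DTree.node X w ts)).WF (SPEC G P C) ∧
        (∀ β, (DTree.node X w ts).label = some β →
           (fwd P C (TMode.S α) (DTree.node X w ts)).label =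
             some (Sum.inl (LCNT.slash β α))) ∧
        s.yield ++ (fwd P C (TMode.S α) (DTree.node X w ts)).yield =
          (DTree.node X w ts).yield ∧
        s.weight * (fwd P C (TMode.S α) (DTree.node X w ts)).weight =
          (DTree.node X w ts).weight := by
      intro s α hs hα
      have hself : s = DTree.node X w ts →
          (fwd P C (TMode.S α) (DTree.node X w ts)) = DTree.node (LCNT.slash α α) 1 [] →
          (fwd P C (TMode.S α) (DTree.node X w ts)).WF (SPEC G P C) ∧
          (∀ β, (DTree.node X w ts).label = some β →
             (fwd P C (TMode.S α) (DTree.node X w ts)).label =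
               some (Sum.inl (LCNT.slash β α))) ∧
          s.yield ++ (fwd P C (TMode.S α) (DTree.node X w ts)).yield =
            (DTree.node X w ts).yield ∧
          s.weight * (fwd P C (TMode.S α) (DTree.node X w ts)).weight =
            (DTree.node X w ts).weight := by
        intro hst heqS
        have hβα : α = Sum.inl X := by
          rw [hst] at hα; simpa using hα.symm
        refine ⟨?_, ?_, ?_, ?_⟩
        · rw [heqS]; exact DTree.WF.node ⟨[], spec_rule3 _, by simp⟩ (by simp)
        · intro β hβ
          simp only [DTree.label_node, Option.some.injEq] at hβ
          rw [heqS, hβα, ← hβ]; simp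
        · rw [heqS, hst]; simp
        · rw [heqS, hst]; simp
      cases ts with
      | nil =>
        have hst : s = DTree.node X w [] := by
          rw [stopT_nil] at hs; split at hs
          · cases hs; rfl
          · simp at hs
        exact hself hst (fwd_S_nil P C α X w)
      | cons t1 rest =>
        by_cases hc : InP P X (t1 :: rest) w ∧ (stopT P C t1).isSome
        · rcases hso : stopT P C t1 with _ | s'
          · rw [hso] at hc; simp at hc
          · have hs' : s' = s := by
              rw [stopT_cons, if_pos hc.1, hso] at hs; simpa using hs
            subst hs'
            obtain ⟨α'', rrhs, hre, hl1, hlr⟩ := rhs_of_cons hlab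
            subst hre
            have hpm : (X, α'' :: rrhs, w) ∈ P := (inP_iff hlab).mp hc.1
            have hS1 := (hRec t1 (by simp)).1.2 s' α hso hα
            rw [fwd_S_pos P C hc]
            refine ⟨?_, ?_, ?_, ?_⟩
            · refine DTree.WF.node
                ⟨Sum.inl (LCNT.slash α'' α) :: rrhs.map emb, spec_rule4 α hpm, ?_⟩ ?_
              · simp only [List.map_cons, hS1.2.1 α'' hl1]
                rw [labels_map_emb hlr (fun c hc' => (hOc c (by simp [hc'])).2.1)]
              · intro u hu
                simp only [List.mem_cons] at hu
                rcases hu with hu | hu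
                · rw [hu]; exact hS1.1
                · obtain ⟨c, hc', rfl⟩ := List.mem_map.mp hu
                  exact (hOc c (by simp [hc'])).1
            · intro β hβ
              simp only [DTree.label_node, Option.some.injEq] at hβ
              rw [← hβ]; simp
            · simp only [DTree.yield_node, List.map_cons, List.flatten_cons, ← List.append_assoc,
                hS1.2.2.1]
              rw [list_map_comp_congr rest (fun c hc' => (hOc c (by simp [hc'])).2.2.1)]
            · simp only [DTree.weight_node, List.map_cons, List.prod_cons]
              rw [list_map_comp_congr rest (fun c hc' => (hOc c (by simp [hc'])).2.2.2)]
              rw [← hS1.2.2.2]; ring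
        · have hnone : (if InP P X (t1 :: rest) w then stopT P C t1 else none) = none := by
            by_cases hp : InP P X (t1 :: rest) w
            · rw [if_pos hp]
              rcases hx : stopT P C t1 with _ | s''
              · rfl
              · exact absurd ⟨hp, by rw [hx]; simp⟩ hc
            · rw [if_neg hp]
          have hst : s = DTree.node X w (t1 :: rest) := by
            rw [stopT_cons, hnone] at hs
            split at hs <;> first | simp_all | (split at hs <;> simp_all)
          exact hself hst (fwd_S_neg P C hc)
    refine ⟨⟨hFpart, hSpart⟩, ?_⟩
    -- O part
    rcases hstop : stopT P C (DTree.node X w ts) with _ | s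
    · have hXC : (Sum.inl X : GSym N T) ∉ C :=
        stopT_none_label P C hstop (Sum.inl X) (by simp)
      have hF := hFpart (Or.inl hstop)
      rw [fwd_O_none P C hstop]
      refine ⟨?_, by simp [emb], ?_, ?_⟩
      · refine DTree.WF.node ⟨[Sum.inl (LCNT.frozen X)], spec_rule1 hXC, ?_⟩ ?_
        · simp [hF.2.1, frz]
        · intro u hu; simp at hu; rw [hu]; exact hF.1
      · have h1 : (DTree.node (LCNT.orig X) 1
            [fwd P C TMode.F (DTree.node X w ts)]).yield =
            (fwd P C TMode.F (DTree.node X w ts)).yield := by simp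
        rw [h1, hF.2.2.1]
      · have h1 : (DTree.node (LCNT.orig X) 1
            [fwd P C TMode.F (DTree.node X w ts)]).weight =
            (fwd P C TMode.F (DTree.node X w ts)).weight := by simp
        rw [h1, hF.2.2.2]
    · obtain ⟨α, hαl, hαC⟩ := stopT_some_label P C hstop
      have hFs : (fwd P C TMode.F s).WF (SPEC G P C) ∧
          (fwd P C TMode.F s).label = s.label.map frz ∧
          (fwd P C TMode.F s).yield = s.yield ∧
          (fwd P C TMode.F s).weight = s.weight := by
        have hfr : stopT P C s = some s := stopT_idem P C hstop
        rcases stopT_le P C _ _ hstop with h1 | h1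
        · rw [h1]; rw [h1] at hfr; exact hFpart (Or.inr hfr)
        · exact (hRecSmall s h1 (stopT_wf P C hwf hstop)).1.1 (Or.inr hfr)
      have hSs := hSpart s α hstop hαl
      rw [fwd_O_some P C hstop, hαl]
      simp only [Option.getD_some]
      refine ⟨?_, by simp [emb], ?_, ?_⟩
      · refine DTree.WF.node
          ⟨[frz α, Sum.inl (LCNT.slash (Sum.inl X) α)], spec_rule2 hαC, ?_⟩ ?_
        · simp [hFs.2.1, hαl, hSs.2.1 (Sum.inl X) (by simp)]
        · intro u hu
          simp only [List.mem_cons, List.not_mem_nil, or_false] at hu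
          rcases hu with hu | hu
          · rw [hu]; exact hFs.1
          · rw [hu]; exact hSs.1
      · have h1 : (DTree.node (LCNT.orig X) 1
            [fwd P C TMode.F s,
             fwd P C (TMode.S α) (DTree.node X w ts)]).yield =
            s.yield ++ (fwd P C (TMode.S α) (DTree.node X w ts)).yield := by
          simp [hFs.2.2.1]
        rw [h1, hSs.2.2.1]
      · have h1 : (DTree.node (LCNT.orig X) 1
            [fwd P C TMode.F s,
             fwd P C (TMode.S α) (DTree.node X w ts)]).weight =
            s.weight * (fwd P C (TMode.S α) (DTree.node X w ts)).weight := by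
          simp [hFs.2.2.2]
        rw [h1, hSs.2.2.2]
termination_by t => sizeOf t
decreasing_by
  simp at hlt ⊢; omega

end FwdOk
section BwdHelp
open Classical

variable {N T W : Type}

lemma emb_inj {γ δ : GSym N T} (h : emb γ = emb δ) : γ = δ := by
  cases γ <;> cases δ <;> simp [emb] at h <;> simp [h]

lemma frz_inj {γ δ : GSym N T} (h : frz γ = frz δ) : γ = δ := by
  cases γ <;> cases δ <;> simp [frz] at h <;> simp [h]

lemma map_frz_eq_some {o : Option (GSym N T)} {α : GSym N T}
    (h : o.map frz = some (frz α)) : o = some α := by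
  cases o with
  | none => simp at h
  | some v => simp at h; rw [frz_inj h]

lemma map_emb_eq_some {o : Option (GSym N T)} {α : GSym N T}
    (h : o.map emb = some (emb α)) : o = some α := by
  cases o with
  | none => simp at h
  | some v => simp at h; rw [emb_inj h]

lemma mem_emb_of_labels {cs : List (DTree (LCNT N T) T W)} {β' : List (GSym N T)}
    (h : cs.map DTree.label = (β'.map emb).map some) :
    ∀ c ∈ cs, ∃ γ, c.label = some (emb γ) := by
  induction cs generalizing β' with
  | nil => intro c hc; simp at hc
  | cons d ds ih =>
    cases β' with
    | nil => simp at h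
    | cons g gs =>
      simp only [List.map_cons, List.cons.injEq] at h
      intro c hc
      rcases List.mem_cons.mp hc with rfl | hc
      · exact ⟨g, h.1⟩
      · exact ih h.2 c hc

lemma labels_unemb {g : DTree (LCNT N T) T W → DTree N T W}
    {cs : List (DTree (LCNT N T) T W)} {β' : List (GSym N T)}
    (hlab : cs.map DTree.label = (β'.map emb).map some)
    (h : ∀ c ∈ cs, (g c).label.map emb = c.label) :
    (cs.map g).map DTree.label = β'.map some := by
  induction cs generalizing β' with
  | nil => cases β' with
    | nil => simp
    | cons _ _ => simp at hlab
  | cons d ds ih =>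
    cases β' with
    | nil => simp at hlab
    | cons γ gs =>
      simp only [List.map_cons, List.cons.injEq] at hlab ⊢
      constructor
      · have := h d (by simp)
        rw [hlab.1] at this
        exact map_emb_eq_some this
      · exact ih hlab.2 (fun c hc => h c (by simp [hc]))

lemma fwd_S_stop [One W] (P : Set (GRule N T W)) (C : Set (GSym N T)) (α : GSym N T)
    {b : DTree N T W} (hb : stopT P C b = some b) :
    fwd P C (TMode.S α) b = DTree.node (LCNT.slash α α) 1 [] := by
  cases b with
  | leaf a => simp
  | gap => rw [stopT] at hb; simp at hb
  | node Y wy bs =>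
    cases bs with
    | nil => exact fwd_S_nil P C α Y wy
    | cons b1 brest =>
      refine fwd_S_neg P C ?_
      rintro ⟨hp, hso⟩
      rcases hx : stopT P C b1 with _ | s''
      · rw [hx] at hso; simp at hso
      · have hcons : stopT P C (DTree.node Y wy (b1 :: brest)) = some s'' := by
          rw [stopT_cons, if_pos hp, hx]
        rw [hb] at hcons
        have hle := stopT_le P C b1 s'' hx
        have : sizeOf s'' < sizeOf (DTree.node Y wy (b1 :: brest)) := by
          rcases hle with rfl | hlt
          · simp; omega
          · simp at hlt ⊢; omega
        rw [show s'' = DTree.node Y wy (b1 :: brest) from by injection hcons with h; rw [h]]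
          at this
        exact lt_irrefl _ this
end BwdHelp
section BwdOk
open Classical

variable {N T W : Type} [CommSemiring W]

/-- Conclusion of the backward correctness lemma. -/
abbrev BwdConc (G : WCFG N T W) (P : Set (GRule N T W)) (C : Set (GSym N T))
    (u : DTree (LCNT N T) T W) : Prop :=
  ((∃ γ, u.label = some (frz γ)) →
     (bwd none u).WF G ∧
     (bwd none u).label.map frz = u.label ∧
     (bwd none u).yield = u.yield ∧
     (bwd none u).weight = u.weight ∧
     fwd P C TMode.F (bwd none u) = u ∧
     (∀ β, (bwd none u).label = some β →
        stopT P C (bwd none u) = if β ∈ C then some (bwd none u) else none)) ∧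
  (∀ (β α : GSym N T) (b : DTree N T W),
     u.label = some (Sum.inl (LCNT.slash β α)) →
     b.WF G → b.label = some α → stopT P C b = some b →
     (bwd (some b) u).WF G ∧
     (bwd (some b) u).label = some β ∧
     (bwd (some b) u).yield = b.yield ++ u.yield ∧
     (bwd (some b) u).weight = b.weight * u.weight ∧
     stopT P C (bwd (some b) u) = some b ∧
     fwd P C (TMode.S α) (bwd (some b) u) = u) ∧
  ((∃ γ, u.label = some (emb γ)) →
     (bwd none u).WF G ∧
     (bwd none u).label.map emb = u.label ∧
     (bwd none u).yield = u.yield ∧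
     (bwd none u).weight = u.weight ∧
     fwd P C TMode.O (bwd none u) = u)

theorem bwd_ok (G : WCFG N T W) (P : Set (GRule N T W)) (C : Set (GSym N T))
    (hP : P ⊆ G.rules) :
    ∀ (u : DTree (LCNT N T) T W), u.WF (SPEC G P C) → BwdConc G P C u
  | DTree.leaf a, _ => by
    refine ⟨?_, ?_, ?_⟩
    · intro _
      refine ⟨by simp only [bwd_leaf]; exact DTree.WF.leaf a, by simp [frz], by simp,
        by simp, by simp, ?_⟩
      intro β hβ
      simp only [bwd_leaf, DTree.label_leaf, Option.some.injEq] at hβ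
      subst hβ
      simp only [bwd_leaf]
      exact stopT_leaf P C a
    · intro β α b hβ
      simp at hβ
    · intro _
      exact ⟨by simp only [bwd_leaf]; exact DTree.WF.leaf a, by simp [emb], by simp,
        by simp, by simp⟩
  | DTree.gap, hwf => by cases hwf
  | DTree.node L wt cs, hwf => by
    obtain ⟨hr, hcs⟩ : RuleApp (SPEC G P C).rules L cs wt ∧
        ∀ c ∈ cs, c.WF (SPEC G P C) := by
      cases hwf with
      | node hr hcs => exact ⟨hr, hcs⟩
    obtain ⟨rhs, hmem, hlab⟩ := hr
    have hRec : ∀ c ∈ cs, BwdConc G P C c := fun c hc =>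
      bwd_ok G P C hP c (hcs c hc)
    simp only [SPEC, Set.mem_union, Set.mem_setOf_eq] at hmem
    rcases hmem with ((((h1 | h2) | h3) | h4) | h5) | h6
    · -- rule 1 : X → X̃
      obtain ⟨X, hXC, he⟩ := h1
      obtain ⟨rfl, rfl, rfl⟩ : L = LCNT.orig X ∧ rhs = [Sum.inl (LCNT.frozen X)] ∧
          wt = 1 := by simpa [Prod.ext_iff] using he
      obtain ⟨u', rfl, hu'l⟩ : ∃ u', cs = [u'] ∧
          u'.label = some (Sum.inl (LCNT.frozen X)) := by
        cases cs with
        | nil => simp at hlab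
        | cons d ds =>
          simp only [List.map_cons, List.map_nil, List.cons.injEq] at hlab
          have hds : ds = [] := by simpa using hlab.2
          exact ⟨d, by rw [hds], hlab.1⟩
      obtain ⟨hWFt, hlabt, hyt, hwt, hrt, hstopt⟩ :=
        (hRec u' (by simp)).1 ⟨Sum.inl X, by rw [hu'l]; rfl⟩
      have htlab : (bwd none u').label = some (Sum.inl X) := by
        rw [hu'l] at hlabt
        exact map_frz_eq_some (α := Sum.inl X) hlabt
      refine ⟨?_, ?_, ?_⟩
      · rintro ⟨γ, hγ⟩
        simp only [DTree.label_node, Option.some.injEq] at hγ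
        cases γ <;> simp [frz] at hγ
      · intro β α b hβ _ _ _
        simp at hβ
      · intro _
        refine ⟨?_, ?_, ?_, ?_, ?_⟩
        · rw [bwd_none_orig1]; exact hWFt
        · rw [bwd_none_orig1, htlab]; simp [emb]
        · rw [bwd_none_orig1, hyt]; simp
        · rw [bwd_none_orig1, hwt]; simp
        · rw [bwd_none_orig1]
          obtain ⟨w2, ts2, ht2⟩ := DTree.eq_node_of_label_inl htlab
          have hstop2 : stopT P C (bwd none u') = none := by
            rw [hstopt (Sum.inl X) htlab, if_neg hXC]
          have h9 : fwd P C TMode.O (bwd none u') =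
              DTree.node (LCNT.orig X) 1 [fwd P C TMode.F (bwd none u')] := by
            rw [ht2] at hstop2
            rw [ht2, fwd_O_none P C hstop2, ← ht2]
          rw [h9, hrt]
    · -- rule 2 : X → α̃ (X/α)
      obtain ⟨X, α, hαC, he⟩ := h2
      obtain ⟨rfl, rfl, rfl⟩ : L = LCNT.orig X ∧
          rhs = [frz α, Sum.inl (LCNT.slash (Sum.inl X) α)] ∧ wt = 1 := by
        simpa [Prod.ext_iff] using he
      obtain ⟨s', c', rfl, hs'l, hc'l⟩ : ∃ s' c', cs = [s', c'] ∧
          s'.label = some (frz α) ∧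
          c'.label = some (Sum.inl (LCNT.slash (Sum.inl X) α)) := by
        cases cs with
        | nil => simp at hlab
        | cons d ds =>
          cases ds with
          | nil => simp at hlab
          | cons e es =>
            simp only [List.map_cons, List.map_nil, List.cons.injEq] at hlab
            have hes : es = [] := by simpa using hlab.2.2
            exact ⟨d, e, by rw [hes], hlab.1, hlab.2.1⟩
      obtain ⟨hbWF, hblm, hby, hbw, hbr, hbstop⟩ :=
        (hRec s' (by simp)).1 ⟨α, hs'l⟩
      have hbl : (bwd none s').label = some α := by
        rw [hs'l] at hblm; exact map_frz_eq_some hblm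
      have hbs : stopT P C (bwd none s') = some (bwd none s') := by
        rw [hbstop α hbl, if_pos hαC]
      obtain ⟨hWFt, htlab, hyt, hwt, hstopt, hrt⟩ :=
        (hRec c' (by simp)).2.1 (Sum.inl X) α (bwd none s') hc'l hbWF hbl hbs
      refine ⟨?_, ?_, ?_⟩
      · rintro ⟨γ, hγ⟩
        simp only [DTree.label_node, Option.some.injEq] at hγ
        cases γ <;> simp [frz] at hγ
      · intro β α0 b hβ _ _ _
        simp at hβ
      · intro _
        refine ⟨?_, ?_, ?_, ?_, ?_⟩
        · rw [bwd_none_orig2]; exact hWFt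
        · rw [bwd_none_orig2, htlab]; simp [emb]
        · rw [bwd_none_orig2, hyt, hby]; simp
        · rw [bwd_none_orig2, hwt, hbw]; simp
        · rw [bwd_none_orig2]
          obtain ⟨w2, ts2, ht2⟩ := DTree.eq_node_of_label_inl htlab
          have h9 : fwd P C TMode.O (bwd (some (bwd none s')) c') =
              DTree.node (LCNT.orig X) 1
                [fwd P C TMode.F (bwd none s'),
                 fwd P C (TMode.S α) (bwd (some (bwd none s')) c')] := by
            rw [ht2] at hstopt
            rw [ht2, fwd_O_some P C hstopt, ← ht2, hbl]
            simp
          rw [h9, hbr, hrt]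
    · -- rule 3 : α/α → ε
      obtain ⟨α, he⟩ := h3
      obtain ⟨rfl, rfl, rfl⟩ : L = LCNT.slash α α ∧ rhs = [] ∧ wt = 1 := by
        simpa [Prod.ext_iff] using he
      have hcs0 : cs = [] := by simpa using hlab
      subst hcs0
      refine ⟨?_, ?_, ?_⟩
      · rintro ⟨γ, hγ⟩
        simp only [DTree.label_node, Option.some.injEq] at hγ
        cases γ <;> simp [frz] at hγ
      · intro β α0 b hβ hbWF hbl hbs
        simp only [DTree.label_node, Option.some.injEq, Sum.inl.injEq,
          LCNT.slash.injEq] at hβ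
        obtain ⟨hβ1, hβ2⟩ := hβ
        subst hβ1; subst hβ2
        refine ⟨by simpa using hbWF, by simpa using hbl, by simp, by simp,
          by simpa using hbs, ?_⟩
        rw [bwd_some_nil]
        exact fwd_S_stop P C _ hbs
      · rintro ⟨γ, hγ⟩
        simp only [DTree.label_node, Option.some.injEq] at hγ
        cases γ <;> simp [emb] at hγ
    · -- rule 4 : X/Y → (α/Y) β
      obtain ⟨X, α', β', w0, Y, hpm, he⟩ := h4
      obtain ⟨rfl, rfl, rfl⟩ : L = LCNT.slash (Sum.inl X) Y ∧
          rhs = Sum.inl (LCNT.slash α' Y) :: β'.map emb ∧ wt = w0 := by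
        simpa [Prod.ext_iff] using he
      obtain ⟨c', cs', rfl, hc'l, hlab2⟩ : ∃ c' cs', cs = c' :: cs' ∧
          c'.label = some (Sum.inl (LCNT.slash α' Y)) ∧
          cs'.map DTree.label = (β'.map emb).map some := by
        cases cs with
        | nil => simp at hlab
        | cons d ds =>
          simp only [List.map_cons, List.cons.injEq] at hlab
          exact ⟨d, ds, rfl, hlab.1, hlab.2⟩
      have hO : ∀ c ∈ cs',
          (bwd none c).WF G ∧
          (bwd none c).label.map emb = c.label ∧
          (bwd none c).yield = c.yield ∧
          (bwd none c).weight = c.weight ∧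
          fwd P C TMode.O (bwd none c) = c := fun c hc =>
        (hRec c (by simp [hc])).2.2 (mem_emb_of_labels hlab2 c hc)
      have hlabs : (cs'.map (bwd (none : Option (DTree N T W)))).map DTree.label =
          β'.map some := labels_unemb hlab2 (fun c hc => (hO c hc).2.1)
      refine ⟨?_, ?_, ?_⟩
      · rintro ⟨γ, hγ⟩
        simp only [DTree.label_node, Option.some.injEq] at hγ
        cases γ <;> simp [frz] at hγ
      · intro β α0 b hβ hbWF hbl hbs
        simp only [DTree.label_node, Option.some.injEq, Sum.inl.injEq,
          LCNT.slash.injEq] at hβ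
        obtain ⟨hβ1, hβ2⟩ := hβ
        subst hβ1; subst hβ2
        obtain ⟨hWF1, hlab1, hy1, hw1, hstop1, hr1⟩ :=
          (hRec c' (by simp)).2.1 α' Y b hc'l hbWF hbl hbs
        have hInP : InP P X (bwd (some b) c' ::
            cs'.map (bwd (none : Option (DTree N T W)))) wt :=
          ⟨α' :: β', hpm, by simp [hlab1, hlabs]⟩
        refine ⟨?_, ?_, ?_, ?_, ?_, ?_⟩
        · rw [bwd_some_cons]
          refine DTree.WF.node ⟨α' :: β', hP hpm, by simp [hlab1, hlabs]⟩ ?_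
          intro v hv
          rcases List.mem_cons.mp hv with rfl | hv
          · exact hWF1
          · obtain ⟨c, hc, rfl⟩ := List.mem_map.mp hv
            exact (hO c hc).1
        · rw [bwd_some_cons]; simp
        · rw [bwd_some_cons]
          simp only [DTree.yield_node, List.map_cons, List.flatten_cons, hy1]
          rw [list_map_comp_congr cs' (fun c hc => (hO c hc).2.2.1), List.append_assoc]
        · rw [bwd_some_cons]
          simp only [DTree.weight_node, List.map_cons, List.prod_cons, hw1]
          rw [list_map_comp_congr cs' (fun c hc => (hO c hc).2.2.2.1)]
          ring
        · rw [bwd_some_cons, stopT_cons, if_pos hInP, hstop1]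
        · rw [bwd_some_cons, fwd_S_pos P C ⟨hInP, by rw [hstop1]; simp⟩, hr1]
          rw [list_map_comp_id _ (fun c hc => (hO c hc).2.2.2.2)]
      · rintro ⟨γ, hγ⟩
        simp only [DTree.label_node, Option.some.injEq] at hγ
        cases γ <;> simp [emb] at hγ
    · -- rule 5 : X̃ → rhs (rule not in P)
      obtain ⟨X, rhs0, w0, hG0, hnP, he⟩ := h5
      obtain ⟨rfl, rfl, rfl⟩ : L = LCNT.frozen X ∧ rhs = rhs0.map emb ∧ wt = w0 := by
        simpa [Prod.ext_iff] using he
      have hO : ∀ c ∈ cs,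
          (bwd none c).WF G ∧
          (bwd none c).label.map emb = c.label ∧
          (bwd none c).yield = c.yield ∧
          (bwd none c).weight = c.weight ∧
          fwd P C TMode.O (bwd none c) = c := fun c hc =>
        (hRec c hc).2.2 (mem_emb_of_labels hlab c hc)
      have hlabs : (cs.map (bwd (none : Option (DTree N T W)))).map DTree.label =
          rhs0.map some := labels_unemb hlab (fun c hc => (hO c hc).2.1)
      have hnInP : ¬ InP P X (cs.map (bwd (none : Option (DTree N T W)))) wt :=
        fun hip => hnP ((inP_iff hlabs).mp hip)
      refine ⟨?_, ?_, ?_⟩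
      · intro _
        refine ⟨?_, ?_, ?_, ?_, ?_, ?_⟩
        · rw [bwd_none_frozen]
          refine DTree.WF.node ⟨rhs0, hG0, hlabs⟩ ?_
          intro v hv
          obtain ⟨c, hc, rfl⟩ := List.mem_map.mp hv
          exact (hO c hc).1
        · rw [bwd_none_frozen]; simp [frz]
        · rw [bwd_none_frozen]
          simp only [DTree.yield_node]
          rw [list_map_comp_congr cs (fun c hc => (hO c hc).2.2.1)]
        · rw [bwd_none_frozen]
          simp only [DTree.weight_node]
          rw [list_map_comp_congr cs (fun c hc => (hO c hc).2.2.2.1)]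
        · rw [bwd_none_frozen]
          cases cs with
          | nil => rw [List.map_nil, fwd_F_nil]
          | cons c1 cs' =>
            rw [List.map_cons] at hnInP ⊢
            rw [fwd_F_neg P C hnInP, ← List.map_cons]
            rw [list_map_comp_id _ (fun c hc => (hO c hc).2.2.2.2)]
        · intro β hβ
          rw [bwd_none_frozen] at hβ ⊢
          simp only [DTree.label_node, Option.some.injEq] at hβ
          subst hβ
          cases cs with
          | nil => rw [List.map_nil, stopT_nil]
          | cons c1 cs' =>
            rw [List.map_cons] at hnInP ⊢
            rw [stopT_cons, if_neg hnInP]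
      · intro β α0 b hβ _ _ _
        simp at hβ
      · rintro ⟨γ, hγ⟩
        simp only [DTree.label_node, Option.some.injEq] at hγ
        cases γ <;> simp [emb] at hγ
    · -- rule 6 : X̃ → α̃ β (rule in P, α ∉ C)
      obtain ⟨X, α', β', w0, hpm, hα'C, he⟩ := h6
      obtain ⟨rfl, rfl, rfl⟩ : L = LCNT.frozen X ∧ rhs = frz α' :: β'.map emb ∧
          wt = w0 := by simpa [Prod.ext_iff] using he
      obtain ⟨c1, cs', rfl, hc1l, hlab2⟩ : ∃ c1 cs', cs = c1 :: cs' ∧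
          c1.label = some (frz α') ∧
          cs'.map DTree.label = (β'.map emb).map some := by
        cases cs with
        | nil => simp at hlab
        | cons d ds =>
          simp only [List.map_cons, List.cons.injEq] at hlab
          exact ⟨d, ds, rfl, hlab.1, hlab.2⟩
      obtain ⟨hWF1, hlab1m, hy1, hw1, hr1, hstop1⟩ :=
        (hRec c1 (by simp)).1 ⟨α', hc1l⟩
      have hlab1 : (bwd none c1).label = some α' := by
        rw [hc1l] at hlab1m; exact map_frz_eq_some hlab1m
      have hstopc : stopT P C (bwd none c1) = none := by
        rw [hstop1 α' hlab1, if_neg hα'C]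
      have hO : ∀ c ∈ cs',
          (bwd none c).WF G ∧
          (bwd none c).label.map emb = c.label ∧
          (bwd none c).yield = c.yield ∧
          (bwd none c).weight = c.weight ∧
          fwd P C TMode.O (bwd none c) = c := fun c hc =>
        (hRec c (by simp [hc])).2.2 (mem_emb_of_labels hlab2 c hc)
      have hlabs : (cs'.map (bwd (none : Option (DTree N T W)))).map DTree.label =
          β'.map some := labels_unemb hlab2 (fun c hc => (hO c hc).2.1)
      have hInP : InP P X (bwd none c1 ::
          cs'.map (bwd (none : Option (DTree N T W)))) wt :=
        ⟨α' :: β', hpm, by simp [hlab1, hlabs]⟩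
      refine ⟨?_, ?_, ?_⟩
      · intro _
        refine ⟨?_, ?_, ?_, ?_, ?_, ?_⟩
        · rw [bwd_none_frozen, List.map_cons]
          refine DTree.WF.node ⟨α' :: β', hP hpm, by simp [hlab1, hlabs]⟩ ?_
          intro v hv
          rcases List.mem_cons.mp hv with rfl | hv
          · exact hWF1
          · obtain ⟨c, hc, rfl⟩ := List.mem_map.mp hv
            exact (hO c hc).1
        · rw [bwd_none_frozen]; simp [frz]
        · rw [bwd_none_frozen]
          simp only [DTree.yield_node, List.map_cons, List.flatten_cons, hy1]
          rw [list_map_comp_congr cs' (fun c hc => (hO c hc).2.2.1)]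
        · rw [bwd_none_frozen]
          simp only [DTree.weight_node, List.map_cons, List.prod_cons, hw1]
          rw [list_map_comp_congr cs' (fun c hc => (hO c hc).2.2.2.1)]
        · rw [bwd_none_frozen, List.map_cons]
          rw [fwd_F_pos P C hInP, hr1]
          rw [list_map_comp_id _ (fun c hc => (hO c hc).2.2.2.2)]
        · intro β hβ
          rw [bwd_none_frozen] at hβ ⊢
          simp only [DTree.label_node, Option.some.injEq] at hβ
          subst hβ
          rw [List.map_cons, stopT_cons, if_pos hInP, hstopc]
      · intro β α0 b hβ _ _ _
        simp at hβ
      · rintro ⟨γ, hγ⟩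
        simp only [DTree.label_node, Option.some.injEq] at hγ
        cases γ <;> simp [emb] at hγ
termination_by u => sizeOf u
decreasing_by
  have := List.sizeOf_lt_of_mem hc; simp at this ⊢; omega

end BwdOk
end SpecProof
/-- The speculation transformation is N-bijectively equivalent to the original
grammar; in particular it defines the same weighted language. -/
theorem SPEC_bijective_equivalence [CommSemiring W]
    (G : WCFG N T W) (P : Set (GRule N T W)) (C : Set (GSym N T))
    (hP : P ⊆ G.rules) (hPnn : ∀ r ∈ P, r.2.1 ≠ []) :
    ∃ φ : {t : DTree N T W // t.WF G ∧ ∃ X : N, t.label = some (Sum.inl X)} ≃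
          {t : DTree (LCNT N T) T W // t.WF (SPEC G P C) ∧
             ∃ X : N, t.label = some (Sum.inl (LCNT.orig X))},
      (∀ t, (φ t : DTree (LCNT N T) T W).label = t.1.label.map emb ∧
            (φ t : DTree (LCNT N T) T W).yield = t.1.yield ∧
            (φ t : DTree (LCNT N T) T W).weight = t.1.weight) ∧
      (∀ x : List T, G.lang (Sum.inl G.start) x =
          (SPEC G P C).lang (Sum.inl (LCNT.orig G.start)) x) := by
  classical
  refine ⟨⟨fun t => ⟨fwd P C TMode.O t.1, ?_, ?_⟩, fun u => ⟨bwd none u.1, ?_, ?_⟩,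
      ?_, ?_⟩, ?_, ?_⟩
  · exact (fwd_ok G P C hP hPnn t.1 t.2.1).2.1
  · obtain ⟨X, hX⟩ := t.2.2
    exact ⟨X, by rw [(fwd_ok G P C hP hPnn t.1 t.2.1).2.2.1, hX]; rfl⟩
  · obtain ⟨X, hX⟩ := u.2.2
    exact ((bwd_ok G P C hP u.1 u.2.1).2.2 ⟨Sum.inl X, by rw [hX]; rfl⟩).1
  · obtain ⟨X, hX⟩ := u.2.2
    have h := ((bwd_ok G P C hP u.1 u.2.1).2.2 ⟨Sum.inl X, by rw [hX]; rfl⟩).2.1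
    rw [hX] at h
    exact ⟨X, map_emb_eq_some (α := Sum.inl X) h⟩
  · intro t
    exact Subtype.ext ((fb P C t.1).2.2)
  · intro u
    obtain ⟨X, hX⟩ := u.2.2
    exact Subtype.ext
      (((bwd_ok G P C hP u.1 u.2.1).2.2 ⟨Sum.inl X, by rw [hX]; rfl⟩).2.2.2.2)
  · intro t
    have h := (fwd_ok G P C hP hPnn t.1 t.2.1).2
    exact ⟨h.2.1, h.2.2.1, h.2.2.2⟩
  · intro x
    obtain ⟨e, hee⟩ : ∃ e : {t : DTree N T W // t.WF G ∧ t.label = some (Sum.inl G.start) ∧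
          t.yield = x} ≃
        {t : DTree (LCNT N T) T W // t.WF (SPEC G P C) ∧
          t.label = some (Sum.inl (LCNT.orig G.start)) ∧ t.yield = x},
        ∀ t, (e t : DTree (LCNT N T) T W) = fwd P C TMode.O t.1 := by
      refine ⟨⟨fun t => ⟨fwd P C TMode.O t.1, ?_, ?_, ?_⟩,
        fun u => ⟨bwd none u.1, ?_, ?_, ?_⟩, ?_, ?_⟩, fun t => rfl⟩
      · exact (fwd_ok G P C hP hPnn t.1 t.2.1).2.1
      · rw [(fwd_ok G P C hP hPnn t.1 t.2.1).2.2.1, t.2.2.1]; rfl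
      · rw [(fwd_ok G P C hP hPnn t.1 t.2.1).2.2.2.1, t.2.2.2]
      · exact ((bwd_ok G P C hP u.1 u.2.1).2.2
          ⟨Sum.inl G.start, by rw [u.2.2.1]; rfl⟩).1
      · have h := ((bwd_ok G P C hP u.1 u.2.1).2.2
          ⟨Sum.inl G.start, by rw [u.2.2.1]; rfl⟩).2.1
        rw [u.2.2.1] at h
        exact map_emb_eq_some (α := Sum.inl G.start) h
      · rw [((bwd_ok G P C hP u.1 u.2.1).2.2
          ⟨Sum.inl G.start, by rw [u.2.2.1]; rfl⟩).2.2.1, u.2.2.2]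
      · intro t
        exact Subtype.ext ((fb P C t.1).2.2)
      · intro u
        exact Subtype.ext (((bwd_ok G P C hP u.1 u.2.1).2.2
          ⟨Sum.inl G.start, by rw [u.2.2.1]; rfl⟩).2.2.2.2)
    rw [WCFG.lang, WCFG.lang]
    refine finsum_eq_of_bijective e e.bijective fun t => ?_
    rw [hee t]
    exact ((fwd_ok G P C hP hPnn t.1 t.2.1).2.2.2.2).symm
end

section
/- The filtering optimization preserves the weighted language: restricting the rules of GLCT(G, P, C) by (i) keeping a slashed rule mentioning Y/α only when α is reachable from Y in the left-recursion graph restricted to P-rules, and (ii) keeping rules mentioning Y/α only when Y is in the retained set (Y = S, or Y occurs in a non-leftmost right-hand-side position of a P-rule, or Y occurs anywhere in the right-hand side of a rule in R\P), removes only useless rules, and hence the filtered grammar defines the same weighted language as GLCT(G, P, C). -/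
variable {N T W : Type}

/-- The rule mentions the slashed nonterminal `y/a` (on either side). -/
def MentionsSlash (r : GRule (LCNT N T) T W) (y a : GSym N T) : Prop :=
  r.1 = LCNT.slash y a ∨ Sum.inl (LCNT.slash y a) ∈ r.2.1

/-- The retained set: the start symbol, symbols in non-leftmost positions of
P-rules, and symbols anywhere on the right-hand side of rules in R \\ P. -/
def RetainedSet (G : WCFG N T W) (P : Set (GRule N T W)) : Set (GSym N T) :=
  {s | s = Sum.inl G.start ∨
       (∃ (X : N) (rhs : List (GSym N T)) (w : W), (X, rhs, w) ∈ P ∧ s ∈ rhs.tail) ∨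
       (∃ (X : N) (rhs : List (GSym N T)) (w : W),
          (X, rhs, w) ∈ G.rules ∧ (X, rhs, w) ∉ P ∧ s ∈ rhs)}

/-- GLCT with the filtering optimization: keep a rule mentioning `y/a` only when
`a` is reachable from `y` in the P-restricted left-recursion graph and `y` is retained. -/
def FilteredGLCT [One W] (G : WCFG N T W) (P : Set (GRule N T W)) (C : Set (GSym N T)) :
    WCFG (LCNT N T) T W where
  start := LCNT.orig G.start
  rules := {r | r ∈ (GLCT G P C).rules ∧
    ∀ y a : GSym N T, MentionsSlash r y a →
      Relation.ReflTransGen (EdgeRel P) y a ∧ y ∈ RetainedSet G P}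

namespace DTree

theorem exists_mem_label_eq_of_mem_rhs {ts : List (DTree N T W)} {rhs : List (GSym N T)}
    (h : ts.map label = rhs.map some) {σ : GSym N T} (hσ : σ ∈ rhs) :
    ∃ t ∈ ts, t.label = some σ :=
  List.mem_map.1 (h ▸ List.mem_map_of_mem hσ : some σ ∈ ts.map label)

theorem exists_mem_rhs_label_eq {ts : List (DTree N T W)} {rhs : List (GSym N T)}
    (h : ts.map label = rhs.map some) {t : DTree N T W} (ht : t ∈ ts) :
    ∃ σ ∈ rhs, t.label = some σ := by
  obtain ⟨σ, hσ, he⟩ := List.mem_map.1 (h ▸ List.mem_map_of_mem ht : t.label ∈ rhs.map some)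
  exact ⟨σ, hσ, he.symm⟩

theorem WF.mono {G G' : WCFG N T W} (h : G.rules ⊆ G'.rules) {t : DTree N T W}
    (ht : t.WF G) : t.WF G' := by
  induction ht with
  | leaf a => exact .leaf a
  | node hra _ ih =>
    obtain ⟨rhs, hr, hl⟩ := hra
    exact .node ⟨rhs, h hr, hl⟩ ih

theorem Sub.wf {G : WCFG N T W} {s t : DTree N T W} (hs : s.Sub t) (ht : t.WF G) :
    s.WF G := by
  induction hs with
  | refl => exact ht
  | child hmem _ ih =>
    cases ht with
    | node _ hts => exact ih (hts _ hmem)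

theorem WF.of_forall_sub {G G' : WCFG N T W} {t : DTree N T W} (ht : t.WF G)
    (h : ∀ X w ts rhs, (DTree.node X w ts).Sub t → (X, rhs, w) ∈ G.rules →
      ts.map label = rhs.map some → (X, rhs, w) ∈ G'.rules) :
    t.WF G' := by
  induction ht with
  | leaf a => exact .leaf a
  | @node X w ts hra _ ih =>
    obtain ⟨rhs, hr, hl⟩ := hra
    refine .node ⟨rhs, h X w ts rhs (.refl _) hr hl, hl⟩ fun t hmem => ih t hmem ?_
    exact fun X' w' ts' rhs' hs => h X' w' ts' rhs' (.child hmem hs)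

theorem Sub.label_invariant {G : WCFG N T W} {I : GSym N T → Prop}
    (hI : ∀ r ∈ G.rules, I (Sum.inl r.1) → ∀ σ ∈ r.2.1, I σ)
    {s t : DTree N T W} (hs : s.Sub t) (ht : t.WF G) (hroot : ∀ σ ∈ t.label, I σ) :
    ∀ σ ∈ s.label, I σ := by
  induction hs with
  | refl => exact hroot
  | child hmem _ ih =>
    cases ht with
    | node hra hts =>
      obtain ⟨rhs, hr, hl⟩ := hra
      refine ih (hts _ hmem) fun σ hσ => ?_
      obtain ⟨σ', hσ', he⟩ := exists_mem_rhs_label_eq hl hmem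
      obtain rfl := Option.some_injective _ (he.symm.trans hσ)
      exact hI _ hr (hroot _ rfl) _ hσ'

end DTree

theorem WCFG.lang_congr [Semiring W] {G G' : WCFG N T W} {α : GSym N T}
    (h : ∀ t : DTree N T W, t.label = some α → (t.WF G ↔ t.WF G')) (x : List T) :
    G.lang α x = G'.lang α x := by
  have hpred : (fun t : DTree N T W => t.WF G ∧ t.label = some α ∧ t.yield = x) =
      (fun t => t.WF G' ∧ t.label = some α ∧ t.yield = x) :=
    funext fun t => propext
      ⟨fun ⟨hw, hl, hy⟩ => ⟨(h t hl).1 hw, hl, hy⟩, fun ⟨hw, hl, hy⟩ => ⟨(h t hl).2 hw, hl, hy⟩⟩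
  unfold WCFG.lang
  rw [hpred]

section GLCT

variable {G : WCFG N T W} {P : Set (GRule N T W)} {C : Set (GSym N T)}

variable (G P) in
def RetainedLabel : GSym (LCNT N T) T → Prop
  | Sum.inl (LCNT.orig Y) => Sum.inl Y ∈ RetainedSet G P
  | Sum.inl (LCNT.slash y _) => y ∈ RetainedSet G P
  | _ => True

theorem retainedLabel_frz (α : GSym N T) : RetainedLabel G P (frz α) := by
  cases α <;> trivial

theorem retainedLabel_emb {β : GSym N T} (h : β ∈ RetainedSet G P) :
    RetainedLabel G P (emb β) := by
  cases β with
  | inl Y => exact h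
  | inr a => trivial

variable [One W]

theorem FilteredGLCT.rules_subset : (FilteredGLCT G P C).rules ⊆ (GLCT G P C).rules :=
  fun _ hr => hr.1

theorem GLCT.slash_rule_cases {r : GRule (LCNT N T) T W} (hr : r ∈ (GLCT G P C).rules)
    {y a : GSym N T} (h : r.1 = LCNT.slash y a) :
    y = a ∨ ∃ X : N, EdgeRel P (Sum.inl X) a ∧ Sum.inl (LCNT.slash y (Sum.inl X)) ∈ r.2.1 := by
  rcases hr with (((((⟨X, -, rfl⟩ | ⟨X, α, -, rfl⟩) | ⟨α, rfl⟩) | ⟨X, α, β, w, Y, hp, rfl⟩) |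
    ⟨X, rhs, w, -, -, rfl⟩) | ⟨X, α, β, w, -, -, rfl⟩) <;>
    simp only [LCNT.slash.injEq, reduceCtorEq] at h
  · exact .inl (h.1.symm.trans h.2)
  · obtain ⟨rfl, rfl⟩ := h
    exact .inr ⟨X, ⟨X, α :: β, w, rfl, hp, rfl⟩, by simp⟩

theorem DTree.WF.reflTransGen_of_label_slash {t : DTree (LCNT N T) T W}
    (ht : t.WF (GLCT G P C)) {y a : GSym N T}
    (hl : t.label = some (Sum.inl (LCNT.slash y a))) :
    Relation.ReflTransGen (EdgeRel P) y a := by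
  induction ht generalizing a with
  | leaf b => simp [DTree.label] at hl
  | @node Z w ts hra _ ih =>
    obtain ⟨rhs, hr, hrhs⟩ := hra
    simp only [DTree.label, Option.some.injEq, Sum.inl.injEq] at hl
    rcases GLCT.slash_rule_cases hr hl with rfl | ⟨X, hedge, hmem⟩
    · exact .refl
    · obtain ⟨t, ht, htl⟩ := DTree.exists_mem_label_eq_of_mem_rhs hrhs hmem
      exact (ih t ht htl).tail hedge

/-- The original symbols that GLCT places on a right-hand side come from non-leftmost
positions of `P`-rules or from rules outside `P`, so they are retained. -/
theorem GLCT.retainedLabel_rhs :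
    ∀ r ∈ (GLCT G P C).rules, RetainedLabel G P (Sum.inl r.1) →
      ∀ σ ∈ r.2.1, RetainedLabel G P σ := by
  rintro r (((((⟨X, -, rfl⟩ | ⟨X, α, -, rfl⟩) | ⟨α, rfl⟩) | ⟨X, α, β, w, Y, hp, rfl⟩) |
    ⟨X, rhs, w, hg, hnp, rfl⟩) | ⟨X, α, β, w, hp, -, rfl⟩) hhead σ hσ
  · obtain rfl := List.mem_singleton.1 hσ
    trivial
  · simp only [List.mem_cons, List.not_mem_nil, or_false] at hσ
    rcases hσ with rfl | rfl
    exacts [retainedLabel_frz α, hhead]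
  · simp at hσ
  · rcases List.mem_append.1 hσ with hσ | hσ
    · obtain ⟨b, hb, rfl⟩ := List.mem_map.1 hσ
      exact retainedLabel_emb (.inr (.inl ⟨X, α :: β, w, hp, hb⟩))
    · obtain rfl := List.mem_singleton.1 hσ
      exact hhead
  · obtain ⟨b, hb, rfl⟩ := List.mem_map.1 hσ
    exact retainedLabel_emb (.inr (.inr ⟨X, rhs, w, hg, hnp, hb⟩))
  · rcases List.mem_cons.1 hσ with rfl | hσ
    · exact retainedLabel_frz α
    · obtain ⟨b, hb, rfl⟩ := List.mem_map.1 hσ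
      exact retainedLabel_emb (.inr (.inl ⟨X, α :: β, w, hp, hb⟩))

theorem GLCT.mem_filteredGLCT_rules_of_sub {t : DTree (LCNT N T) T W}
    (ht : t.WF (GLCT G P C)) (hroot : t.label = some (Sum.inl (LCNT.orig G.start)))
    {X : LCNT N T} {w : W} {ts : List (DTree (LCNT N T) T W)} {rhs : List (GSym (LCNT N T) T)}
    (hs : (DTree.node X w ts).Sub t) (hr : (X, rhs, w) ∈ (GLCT G P C).rules)
    (hl : ts.map DTree.label = rhs.map some) :
    (X, rhs, w) ∈ (FilteredGLCT G P C).rules := by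
  have hnode : (DTree.node X w ts).WF (GLCT G P C) := hs.wf ht
  have hX : RetainedLabel G P (Sum.inl X) := by
    refine hs.label_invariant GLCT.retainedLabel_rhs ht ?_ _ rfl
    rw [hroot]
    rintro _ ⟨⟩
    exact .inl rfl
  refine ⟨hr, fun y a hm => ?_⟩
  rcases hm with rfl | hm
  · exact ⟨hnode.reflTransGen_of_label_slash rfl, hX⟩
  · obtain ⟨c, hmem, hcl⟩ := DTree.exists_mem_label_eq_of_mem_rhs hl hm
    have hc : c.WF (GLCT G P C) := (DTree.Sub.child hmem (.refl c)).wf hnode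
    exact ⟨hc.reflTransGen_of_label_slash hcl, GLCT.retainedLabel_rhs _ hr hX _ hm⟩

end GLCT

theorem filtered_GLCT_preserves_language_general [CommSemiring W]
    (G : WCFG N T W) (P : Set (GRule N T W)) (C : Set (GSym N T)) :
    (∀ r ∈ (GLCT G P C).rules, r ∉ (FilteredGLCT G P C).rules →
        ¬ (GLCT G P C).RuleUseful r) ∧
    (∀ x : List T, (FilteredGLCT G P C).lang (Sum.inl (LCNT.orig G.start)) x =
        (GLCT G P C).lang (Sum.inl (LCNT.orig G.start)) x) := by
  refine ⟨?_, WCFG.lang_congr fun t hroot => ⟨?_, ?_⟩⟩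
  · rintro r hr hnr ⟨t, _, ht, hroot, hs, ts, rfl, hl⟩
    exact hnr (GLCT.mem_filteredGLCT_rules_of_sub ht hroot hs hr hl)
  · exact DTree.WF.mono FilteredGLCT.rules_subset
  · exact fun ht => ht.of_forall_sub fun _ _ _ _ hs hr hl =>
      GLCT.mem_filteredGLCT_rules_of_sub ht hroot hs hr hl

/-- The filtering optimization removes only useless rules and preserves the
weighted language. -/
theorem filtered_GLCT_preserves_language [CommSemiring W]
    (G : WCFG N T W) (P : Set (GRule N T W)) (C : Set (GSym N T))
    (hP : P ⊆ G.rules) (hPnn : ∀ r ∈ P, r.2.1 ≠ []) :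
    (∀ r ∈ (GLCT G P C).rules, r ∉ (FilteredGLCT G P C).rules →
        ¬ (GLCT G P C).RuleUseful r) ∧
    (∀ x : List T, (FilteredGLCT G P C).lang (Sum.inl (LCNT.orig G.start)) x =
        (GLCT G P C).lang (Sum.inl (LCNT.orig G.start)) x) :=
  filtered_GLCT_preserves_language_general G P C
end
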